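/- arXiv:0708.2699 — 5 statements merged into one kernel-verified Lean document; each statement's English description precedes it below -/
import Mathlib

section
/- If q > 1, m and n are positive integers with gcd(mn, q) = 1, then the sum over primitive Dirichlet characters χ mod q of χ(m)·conj(χ)(n) equals the sum over divisors d of q with d dividing (m - n) of φ(d)·μ(q/d). -/
/-!
Write `P(d) = ∑ ψ(a) · conj ψ(b)` over the primitive characters `ψ` mod `d`. Every character mod
`e` is induced by a unique primitive character mod its conductor `d ∣ e`, and inducing does not
change values at integers coprime to `e`. Grouping the characters mod `e` by conductor therefore
turns the orthogonality relation into `∑_{d ∣ e} P(d) = φ(e) · [e ∣ a - b]` for every `e ∣ q`,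
and Möbius inversion over the divisors of `q` gives the formula for `P(q)`.
-/

open Finset

namespace DirichletCharacter

open Classical in
lemma sum_conductor_eq_sum_isPrimitive {R M : Type*} [CommRing R] [IsDomain R] [AddCommMonoid M]
    {d e : ℕ} [NeZero e] (hde : d ∣ e) (F : DirichletCharacter R e → M) :
    ∑ χ with χ.conductor = d, F χ =
      ∑ ψ : DirichletCharacter R d with ψ.IsPrimitive, F (changeLevel hde ψ) := by
  have : NeZero d := ⟨fun h => NeZero.ne e (Nat.eq_zero_of_zero_dvd (h ▸ hde))⟩
  symm
  refine sum_nbij (changeLevel hde) (fun ψ hψ => ?_) (changeLevel_injective hde).injOn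
    (fun χ hχ => ?_) fun _ _ => rfl
  · simp only [mem_filter, mem_univ, true_and] at hψ ⊢
    rw [conductor_changeLevel, hψ]
  · simp only [coe_filter, mem_univ, true_and, Set.mem_ofPred_eq] at hχ ⊢
    subst hχ
    exact ⟨χ.primitiveCharacter, χ.primitiveCharacter_isPrimitive,
      χ.changeLevel_primitiveCharacter⟩

lemma sum_apply_mul_star_apply {e : ℕ} [NeZero e] (a : ℤ) {b : ℤ} (hb : IsCoprime b e) :
    ∑ χ : DirichletCharacter ℂ e, χ a * star χ b =
      if (e : ℤ) ∣ a - b then (e.totient : ℂ) else 0 := by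
  have hbu : IsUnit (b : ZMod e) := (ZMod.coe_int_isUnit_iff_isCoprime b e).mpr hb.symm
  simp_rw [MulChar.star_apply, MulChar.star_apply', MulChar.inv_apply, ← map_mul,
    sum_characters_eq, mul_comm (a : ZMod e), Ring.inverse_mul_eq_iff_eq_mul _ _ _ hbu, mul_one,
    ZMod.intCast_eq_intCast_iff_dvd_sub]
  exact if_congr dvd_sub_comm rfl rfl

open Classical in
lemma sum_divisors_sum_isPrimitive_apply_mul_star_apply {e : ℕ} [NeZero e] {a b : ℤ}
    (ha : IsCoprime a e) (hb : IsCoprime b e) :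
    ∑ d ∈ e.divisors, ∑ ψ : DirichletCharacter ℂ d with ψ.IsPrimitive, ψ a * star ψ b =
      if (e : ℤ) ∣ a - b then (e.totient : ℂ) else 0 := by
  rw [← sum_apply_mul_star_apply a hb, ← sum_fiberwise_of_maps_to
    (g := conductor) fun χ _ => Nat.mem_divisors.mpr ⟨χ.conductor_dvd_level, NeZero.ne e⟩]
  refine sum_congr rfl fun d hd => ?_
  have hde := Nat.dvd_of_mem_divisors hd
  rw [sum_conductor_eq_sum_isPrimitive hde]
  simp only [MulChar.star_apply, changeLevel_eq_cast_of_dvd' _ hde ha,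
    changeLevel_eq_cast_of_dvd' _ hde hb]

open Classical in
theorem sum_isPrimitive_apply_mul_star_apply {q : ℕ} (hq : q ≠ 0) {a b : ℤ}
    (ha : IsCoprime a q) (hb : IsCoprime b q) :
    ∑ χ : DirichletCharacter ℂ q with χ.IsPrimitive, χ a * star χ b =
      ∑ d ∈ q.divisors.filter (fun d : ℕ => (d : ℤ) ∣ a - b),
        (d.totient : ℂ) * ArithmeticFunction.moebius (q / d) := by
  have inversion := (ArithmeticFunction.sum_eq_iff_sum_mul_moebius_eq_on (R := ℂ)
    (f := fun d => ∑ ψ : DirichletCharacter ℂ d with ψ.IsPrimitive, ψ a * star ψ b)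
    (g := fun e => if (e : ℤ) ∣ a - b then (e.totient : ℂ) else 0) {e | e ∣ q}
    (fun _ _ => Nat.dvd_trans)).mp (fun e he hes => ?_) q hq.bot_lt dvd_rfl
  · rw [← inversion, Nat.sum_divisorsAntidiagonal' (fun i j =>
      (ArithmeticFunction.moebius i : ℂ) * if (j : ℤ) ∣ a - b then (j.totient : ℂ) else 0),
      sum_filter]
    refine sum_congr rfl fun d _ => ?_
    rw [mul_ite, mul_zero, mul_comm]
  · have : NeZero e := ⟨he.ne'⟩
    have hdvd := Int.natCast_dvd_natCast.mpr hes
    exact sum_divisors_sum_isPrimitive_apply_mul_star_apply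
      (ha.of_isCoprime_of_dvd_right hdvd) (hb.of_isCoprime_of_dvd_right hdvd)

end DirichletCharacter

theorem sum_primitive_chars_orthogonality_general (q m n : ℕ) (hq : 1 < q)
    (hco : Nat.gcd (m * n) q = 1) :
    (∑ᶠ (χ : DirichletCharacter ℂ q) (_ : χ.IsPrimitive),
        χ (m : ZMod q) * (star χ) (n : ZMod q)) =
      ∑ d ∈ q.divisors.filter (fun d : ℕ => (d : ℤ) ∣ ((m : ℤ) - (n : ℤ))),
        ((Nat.totient d * ArithmeticFunction.moebius (q / d) : ℤ) : ℂ) := by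
  classical
  have hcop {k : ℕ} (hk : k ∣ m * n) : IsCoprime (k : ℤ) q :=
    Nat.isCoprime_iff_coprime.mpr (Nat.Coprime.coprime_dvd_left hk hco)
  have key := DirichletCharacter.sum_isPrimitive_apply_mul_star_apply (by omega : q ≠ 0)
    (hcop (dvd_mul_right m n)) (hcop (dvd_mul_left n m))
  rw [finsum_cond_eq_sum_of_cond_iff _ (t := univ.filter DirichletCharacter.IsPrimitive)
    fun _ => by simp]
  push_cast at key ⊢
  exact key

theorem sum_primitive_chars_orthogonality (q m n : ℕ) (hq : 1 < q)
    (hm : 0 < m) (hn : 0 < n) (hco : Nat.gcd (m * n) q = 1) :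
    (∑ᶠ (χ : DirichletCharacter ℂ q) (_ : χ.IsPrimitive),
        χ (m : ZMod q) * (star χ) (n : ZMod q)) =
      ∑ d ∈ q.divisors.filter (fun d : ℕ => (d : ℤ) ∣ ((m : ℤ) - (n : ℤ))),
        ((Nat.totient d * ArithmeticFunction.moebius (q / d) : ℤ) : ℂ) :=
  sum_primitive_chars_orthogonality_general q m n hq hco
end

section
/- Let c, d, r be positive integers with gcd(r, d) = 1 and gcd(c, d) = 1. Then the sum over integers a with 1 ≤ a ≤ cd, gcd(a, cd) = 1, and a ≡ r (mod d), of e(a/(cd)) equals μ(c)·e(r·c̄/d), where c̄ is an inverse of c modulo d and e(x) = exp(2πix). -/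
open Complex Real

/-- `e x = exp(2πix)` -/
noncomputable def eFun (x : ℝ) : ℂ := Complex.exp (2 * Real.pi * Complex.I * x)

/-!
Choose `u` with `d * u ≡ 1 (mod c)`. Since `d * u + c * c̄ ≡ 1 (mod c * d)`, the primitive
`(c * d)`-th root of unity `ζ = e(1 / (c * d))` factors as `ζ = ζ ^ (d * u) * ζ ^ (c * c̄)`, so for
`a ≡ r (mod d)` the term `e(a / (c * d)) = ζ ^ a` equals `ω ^ (a % c) * e(r * c̄ / d)` with
`ω = ζ ^ (d * u)` a primitive `c`-th root of unity. By the Chinese remainder theorem `a ↦ a % c`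
maps the summation range bijectively onto the residues prime to `c`, which leaves the Ramanujan sum
`∑_{(b, c) = 1} ω ^ b = μ(c)`: expand the indicator of `(b, c) = 1` as `∑_{e ∣ (b, c)} μ(e)`, and
the sum of `ω ^ b` over the multiples `b` of `e ∣ c` is a geometric sum that vanishes unless `e = c`.
-/

open Finset
open scoped ArithmeticFunction.Moebius

theorem Finset.sum_Icc_one_eq_sum_range {M : Type*} [AddCommMonoid M] {f : ℕ → M} {n : ℕ}
    (h : f n = f 0) : ∑ a ∈ Icc 1 n, f a = ∑ a ∈ range n, f a := by
  rcases Nat.eq_zero_or_pos n with rfl | hn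
  · simp
  rw [range_eq_Ico, sum_eq_sum_Ico_succ_bot hn, ← Ico_add_one_right_eq_Icc, sum_Ico_succ_top hn,
    h, add_comm]

theorem Nat.range_mul_filter_dvd_eq {e : ℕ} (he : e ≠ 0) (k : ℕ) :
    {a ∈ range (e * k) | e ∣ a} = (range k).map ⟨(e * ·), mul_right_injective₀ he⟩ := by
  ext a
  simp only [mem_filter, mem_range, mem_map, Function.Embedding.coeFn_mk]
  constructor
  · rintro ⟨ha, b, rfl⟩
    exact ⟨b, Nat.lt_of_mul_lt_mul_left ha, rfl⟩
  · rintro ⟨b, hb, rfl⟩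
    exact ⟨Nat.mul_lt_mul_of_pos_left hb (Nat.pos_of_ne_zero he), dvd_mul_right e b⟩

theorem Nat.sum_range_mul_coprime_modEq_comp_mod {M : Type*} [AddCommMonoid M] {c d r : ℕ}
    (hcd : c.Coprime d) (hrd : r.Coprime d) (hd : d ≠ 0) (f : ℕ → M) :
    ∑ a ∈ range (c * d) with a.gcd (c * d) = 1 ∧ a ≡ r [MOD d], f (a % c) =
      ∑ b ∈ range c with b.gcd c = 1, f b := by
  rcases eq_or_ne c 0 with rfl | hc
  · simp
  refine sum_nbij' (· % c) (fun b => chineseRemainder hcd b r) ?_ ?_ ?_ ?_ fun _ _ => rfl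
  · intro a ha
    simp only [mem_filter, mem_range] at ha ⊢
    exact ⟨mod_lt a (Nat.pos_of_ne_zero hc),
      (mod_modEq a c).gcd_eq.trans (Coprime.coprime_dvd_right (dvd_mul_right c d) ha.2.1)⟩
  · intro b hb
    simp only [mem_filter, mem_range] at hb ⊢
    obtain ⟨hkc, hkd⟩ := (chineseRemainder hcd b r).2
    exact ⟨chineseRemainder_lt_mul hcd b r hc hd,
      Coprime.mul_right (hkc.gcd_eq.trans hb.2) (hkd.gcd_eq.trans hrd), hkd⟩
  · intro a ha
    simp only [mem_filter, mem_range] at ha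
    have hk : a ≡ chineseRemainder hcd (a % c) r [MOD c * d] :=
      chineseRemainder_modEq_unique hcd (mod_modEq a c).symm ha.2.2
    exact (hk.eq_of_lt_of_lt ha.1 (chineseRemainder_lt_mul hcd _ r hc hd)).symm
  · intro b hb
    simp only [mem_filter, mem_range] at hb
    exact Eq.trans (chineseRemainder hcd b r).2.1 (mod_eq_of_lt hb.1)

theorem ArithmeticFunction.sum_divisors_moebius {R : Type*} [Ring R] (m : ℕ) :
    ∑ e ∈ m.divisors, (μ e : R) = if m = 1 then 1 else 0 := by
  have h := congr($(coe_moebius_mul_coe_zeta (R := R)) m)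
  simp only [coe_mul_zeta_apply, one_apply] at h
  simpa using h

namespace IsPrimitiveRoot

variable {R : Type*} [CommRing R] [IsDomain R] {ζ : R} {n : ℕ}

theorem geom_sum_eq_ite (hζ : IsPrimitiveRoot ζ n) :
    ∑ i ∈ range n, ζ ^ i = if n = 1 then 1 else 0 := by
  rcases lt_trichotomy n 1 with hn | rfl | hn
  · simp [Nat.lt_one_iff.mp hn]
  · simp
  · rw [hζ.geom_sum_eq_zero hn, if_neg hn.ne']

theorem sum_range_filter_dvd_pow (hζ : IsPrimitiveRoot ζ n) (hn : n ≠ 0) {e : ℕ} (he : e ∣ n) :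
    ∑ a ∈ range n with e ∣ a, ζ ^ a = if e = n then 1 else 0 := by
  obtain ⟨k, rfl⟩ := he
  have he0 : e ≠ 0 := left_ne_zero_of_mul hn
  rw [Nat.range_mul_filter_dvd_eq he0, sum_map]
  simp only [Function.Embedding.coeFn_mk, pow_mul]
  rw [(hζ.pow (Nat.pos_of_ne_zero hn) rfl).geom_sum_eq_ite]
  simp [he0]

theorem sum_coprime_pow_eq_moebius (hζ : IsPrimitiveRoot ζ n) :
    ∑ a ∈ range n with a.gcd n = 1, ζ ^ a = μ n := by
  rcases eq_or_ne n 0 with rfl | hn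
  · simp
  calc ∑ a ∈ range n with a.gcd n = 1, ζ ^ a
      = ∑ a ∈ range n, ∑ e ∈ n.divisors with e ∣ a, (μ e : R) * ζ ^ a := by
        rw [sum_filter]
        refine sum_congr rfl fun a _ => ?_
        have hdiv : {e ∈ n.divisors | e ∣ a} = (a.gcd n).divisors := by
          rw [← Nat.divisors_filter_dvd_of_dvd hn (Nat.gcd_dvd_right a n)]
          exact filter_congr fun e he => by
            simp [Nat.dvd_gcd_iff, Nat.dvd_of_mem_divisors he]
        rw [← sum_mul, hdiv, ArithmeticFunction.sum_divisors_moebius]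
        split_ifs <;> simp
    _ = ∑ e ∈ n.divisors, (μ e : R) * ∑ a ∈ range n with e ∣ a, ζ ^ a := by
        simp only [sum_filter, mul_sum]
        rw [sum_comm]
        exact sum_congr rfl fun e _ => sum_congr rfl fun a _ => by split_ifs <;> simp
    _ = μ n := by
        rw [sum_congr rfl fun e he =>
          by rw [hζ.sum_range_filter_dvd_pow hn (Nat.dvd_of_mem_divisors he)]]
        simp [hn]

end IsPrimitiveRoot

theorem eFun_natCast_div (a n : ℕ) : eFun (a / n) = eFun (1 / n) ^ a := by
  simp only [eFun, ← Complex.exp_nat_mul]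
  push_cast
  ring_nf

theorem isPrimitiveRoot_eFun_one_div {n : ℕ} (hn : n ≠ 0) : IsPrimitiveRoot (eFun (1 / n)) n := by
  simpa [eFun, div_eq_mul_inv] using Complex.isPrimitiveRoot_exp n hn

theorem eq_pow_mul_pow_of_coprime {M : Type*} [CommMonoid M] {ζ : M} {c d u v : ℕ}
    (hζ : ζ ^ (c * d) = 1) (hcd : c.Coprime d) (hu : d * u ≡ 1 [MOD c]) (hv : c * v ≡ 1 [MOD d]) :
    ζ = ζ ^ (d * u) * ζ ^ (c * v) := by
  have hc : d * u + c * v ≡ 1 [MOD c] := by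
    rw [Nat.ModEq, mul_comm c v, Nat.add_mul_mod_self_right]; exact hu
  have hd : d * u + c * v ≡ 1 [MOD d] := by
    rw [Nat.ModEq, mul_comm d u, Nat.mul_add_mod_self_right]; exact hv
  rw [← pow_add, pow_eq_pow_of_modEq ((Nat.modEq_and_modEq_iff_modEq_mul hcd).mp ⟨hc, hd⟩) hζ,
    pow_one]

theorem pow_eq_pow_mod_mul_pow_of_modEq {M : Type*} [CommMonoid M] {ζ : M} {c d u v a r : ℕ}
    (hζ : ζ ^ (c * d) = 1) (hcd : c.Coprime d) (hu : d * u ≡ 1 [MOD c]) (hv : c * v ≡ 1 [MOD d])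
    (ha : a ≡ r [MOD d]) : ζ ^ a = (ζ ^ (d * u)) ^ (a % c) * (ζ ^ (c * v)) ^ r := by
  have hc : (ζ ^ (d * u)) ^ c = 1 := by
    rw [← pow_mul, show d * u * c = c * d * u by ring, pow_mul, hζ, one_pow]
  have hd : (ζ ^ (c * v)) ^ d = 1 := by
    rw [← pow_mul, show c * v * d = c * d * v by ring, pow_mul, hζ, one_pow]
  conv_lhs => rw [eq_pow_mul_pow_of_coprime hζ hcd hu hv]
  rw [mul_pow, pow_eq_pow_of_modEq (Nat.mod_modEq a c).symm hc, pow_eq_pow_of_modEq ha hd]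

theorem exp_sum_coprime_case_general (c d r cinv : ℕ) (hc : 0 < c) (hd : 0 < d)
    (hrd : Nat.gcd r d = 1) (hcd : Nat.gcd c d = 1)
    (hcinv : c * cinv ≡ 1 [MOD d]) :
    (∑ a ∈ (Finset.Icc 1 (c * d)).filter
        (fun a => Nat.gcd a (c * d) = 1 ∧ a ≡ r [MOD d]), eFun (a / (c * d))) =
      (ArithmeticFunction.moebius c : ℂ) * eFun ((r * cinv : ℕ) / d) := by
  obtain ⟨u, -, hu⟩ := Nat.exists_mul_mod_eq_of_coprime 1 (Nat.coprime_comm.mp hcd) hc.ne'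
  replace hu : d * u ≡ 1 [MOD c] := hu
  set ζ := eFun (1 / (c * d : ℕ))
  have hζ : IsPrimitiveRoot ζ (c * d) := isPrimitiveRoot_eFun_one_div (by positivity)
  have heFun : ∀ a : ℕ, eFun (a / (c * d)) = ζ ^ a := fun a => by
    rw [← Nat.cast_mul, eFun_natCast_div]
  have hω : IsPrimitiveRoot (ζ ^ (d * u)) c := by
    rw [pow_mul]
    exact (hζ.pow (by positivity) (mul_comm c d)).pow_of_coprime u
      (Nat.Coprime.coprime_mul_left (hu.gcd_eq.trans (Nat.gcd_one_left c)))
  have hρ : (ζ ^ (c * cinv)) ^ r = eFun ((r * cinv : ℕ) / d) := by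
    rw [← pow_mul, ← heFun]
    congr 1
    push_cast
    field_simp
  calc _ = ∑ a ∈ range (c * d) with a.gcd (c * d) = 1 ∧ a ≡ r [MOD d], ζ ^ a := by
        simp only [heFun]
        rw [sum_filter, sum_filter, sum_Icc_one_eq_sum_range]
        simp [Nat.ModEq, hζ.pow_eq_one]
    _ = ∑ a ∈ range (c * d) with a.gcd (c * d) = 1 ∧ a ≡ r [MOD d],
          (ζ ^ (d * u)) ^ (a % c) * (ζ ^ (c * cinv)) ^ r :=
        sum_congr rfl fun a ha =>
          pow_eq_pow_mod_mul_pow_of_modEq hζ.pow_eq_one hcd hu hcinv (mem_filter.mp ha).2.2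
    _ = _ := by
        rw [← sum_mul, Nat.sum_range_mul_coprime_modEq_comp_mod hcd hrd hd.ne',
          hω.sum_coprime_pow_eq_moebius, hρ]

theorem exp_sum_coprime_case (c d r cinv : ℕ) (hc : 0 < c) (hd : 0 < d) (hr : 0 < r)
    (hrd : Nat.gcd r d = 1) (hcd : Nat.gcd c d = 1)
    (hcinv : c * cinv ≡ 1 [MOD d]) :
    (∑ a ∈ (Finset.Icc 1 (c * d)).filter
        (fun a => Nat.gcd a (c * d) = 1 ∧ a ≡ r [MOD d]), eFun (a / (c * d))) =
      (ArithmeticFunction.moebius c : ℂ) * eFun ((r * cinv : ℕ) / d) :=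
  exp_sum_coprime_case_general c d r cinv hc hd hrd hcd hcinv
end

section
/- Let c, d, r be positive integers with gcd(r, d) = 1 and gcd(c, d) > 1. Then the sum over integers a with 1 ≤ a ≤ cd, gcd(a, cd) = 1, and a ≡ r (mod d), of e(a/(cd)) equals 0. -/
open Complex Real

/-! Let `p` be a prime dividing `gcd(c, d)` and `h = cd/p`. Since `p² ∣ cd`, `h` is nilpotent
modulo `cd`, and `d ∣ h`; so translation by `h` permutes the units of `ℤ/cd` that are `≡ r (mod d)`.
The sum `S` of the additive character `x ↦ e(x/cd)` over this set therefore satisfies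
`S = e(h/cd) S = e(1/p) S`, which forces `S = 0`. -/

theorem IsNilpotent.isUnit_add_left_iff {R : Type*} [CommRing R] {r : R} (hr : IsNilpotent r)
    {x : R} : IsUnit (x + r) ↔ IsUnit x :=
  ⟨fun hx ↦ by simpa using hr.neg.isUnit_add_left_of_commute hx (Commute.all _ _),
    fun hx ↦ hr.isUnit_add_left_of_commute hx (Commute.all _ _)⟩

theorem AddChar.sum_eq_zero_of_add_mem_iff {G R : Type*} [AddGroup G] [CommRing R] [IsDomain R]
    (ψ : AddChar G R) {s : Finset G} {h : G} (hs : ∀ x, x + h ∈ s ↔ x ∈ s) (hψ : ψ h ≠ 1) :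
    ∑ x ∈ s, ψ x = 0 := by
  have hshift : ψ h * ∑ x ∈ s, ψ x = ∑ x ∈ s, ψ x := by
    rw [Finset.mul_sum]
    exact Finset.sum_equiv (Equiv.addRight h) (fun x ↦ (hs x).symm)
      (fun x _ ↦ by rw [Equiv.coe_addRight, map_add_eq_mul, mul_comm])
  have : (ψ h - 1) * ∑ x ∈ s, ψ x = 0 := by rw [sub_one_mul, hshift, sub_self]
  exact (mul_eq_zero.mp this).resolve_left (sub_ne_zero.mpr hψ)

theorem ZMod.sum_Icc_one_eq_sum {M : Type*} [AddCommMonoid M] (n : ℕ) [NeZero n]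
    (f : ZMod n → M) : ∑ a ∈ Finset.Icc 1 n, f a = ∑ x, f x := by
  refine Finset.sum_nbij' (↑) (fun x ↦ (x - 1).val + 1) (by simp)
    (fun x _ ↦ Finset.mem_Icc.mpr ⟨by omega, (x - 1).val_lt⟩) (fun a ha ↦ ?_) (by simp) (by simp)
  obtain ⟨ha1, han⟩ := Finset.mem_Icc.mp ha
  rw [← Nat.cast_one, ← Nat.cast_sub ha1, ZMod.val_natCast, Nat.mod_eq_of_lt (by omega)]
  omega

theorem eFun_div_eq_stdAddChar (a n : ℕ) [NeZero n] :
    eFun (a / n) = ZMod.stdAddChar (a : ZMod n) := by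
  rw [ZMod.stdAddChar_apply, ZMod.toCircle_natCast, eFun]
  push_cast
  ring_nf

theorem sum_eFun_coprime_modEq_eq_sum_stdAddChar {n d : ℕ} [NeZero n] (hdn : d ∣ n) (r : ℕ) :
    ∑ a ∈ (Finset.Icc 1 n).filter (fun a => a.gcd n = 1 ∧ a ≡ r [MOD d]), eFun (a / n) =
      ∑ x with IsUnit x ∧ ZMod.castHom hdn (ZMod d) x = r, ZMod.stdAddChar x := by
  rw [Finset.sum_filter, Finset.sum_filter, ← ZMod.sum_Icc_one_eq_sum]
  refine Finset.sum_congr rfl fun a _ ↦ if_congr ?_ (eFun_div_eq_stdAddChar a n) rfl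
  rw [map_natCast, ZMod.natCast_eq_natCast_iff, ZMod.isUnit_iff_coprime, Nat.Coprime]

theorem ZMod.sum_stdAddChar_isUnit_castHom_eq_zero {n d : ℕ} [NeZero n] (hdn : d ∣ n)
    (t : ZMod d) {h : ZMod n} (hnil : IsNilpotent h) (hh : ZMod.castHom hdn (ZMod d) h = 0)
    (h0 : h ≠ 0) :
    ∑ x with IsUnit x ∧ ZMod.castHom hdn (ZMod d) x = t, ZMod.stdAddChar x = 0 :=
  AddChar.sum_eq_zero_of_add_mem_iff _ (h := h)
    (fun x ↦ by simp only [Finset.mem_filter, Finset.mem_univ, true_and, map_add, hh, add_zero,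
      hnil.isUnit_add_left_iff])
    (by rwa [← AddChar.map_zero_eq_one (ZMod.stdAddChar (N := n)),
      ZMod.injective_stdAddChar.ne_iff])

theorem ZMod.sum_stdAddChar_isUnit_castHom_eq_zero_of_one_lt_gcd {c d : ℕ} [NeZero (c * d)]
    (hcd : 1 < c.gcd d) (t : ZMod d) :
    ∑ x : ZMod (c * d) with IsUnit x ∧ ZMod.castHom (dvd_mul_left d c) (ZMod d) x = t,
      ZMod.stdAddChar x = 0 := by
  obtain ⟨p, hp, hpcd⟩ := Nat.exists_prime_and_dvd hcd.ne'
  obtain ⟨c', rfl⟩ := hpcd.trans (Nat.gcd_dvd_left _ _)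
  obtain ⟨d', rfl⟩ := hpcd.trans (Nat.gcd_dvd_right _ _)
  refine ZMod.sum_stdAddChar_isUnit_castHom_eq_zero _ t (h := (c' * (p * d') : ℕ)) ⟨2, ?_⟩ ?_ ?_
  · rw [← Nat.cast_pow, ZMod.natCast_eq_zero_iff]
    exact ⟨c' * d', by ring⟩
  · rw [map_natCast, ZMod.natCast_eq_zero_iff]
    exact dvd_mul_left _ _
  · have hne : p * (c' * (p * d')) ≠ 0 := mul_assoc p c' (p * d') ▸ NeZero.ne _
    rw [Ne, ZMod.natCast_eq_zero_iff, mul_assoc]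
    intro h
    have hpos : 0 < c' * (p * d') := Nat.pos_of_ne_zero (right_ne_zero_of_mul hne)
    exact hp.ne_one (Nat.dvd_one.mp (Nat.dvd_of_mul_dvd_mul_right hpos (by simpa using h)))

theorem exp_sum_noncoprime_case_general (c d r : ℕ) (hc : 0 < c) (hd : 0 < d)
    (hcd : 1 < Nat.gcd c d) :
    (∑ a ∈ (Finset.Icc 1 (c * d)).filter
        (fun a => Nat.gcd a (c * d) = 1 ∧ a ≡ r [MOD d]), eFun (a / (c * d))) = 0 := by
  have : NeZero (c * d) := ⟨(Nat.mul_pos hc hd).ne'⟩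
  simp only [← Nat.cast_mul]
  rw [sum_eFun_coprime_modEq_eq_sum_stdAddChar (dvd_mul_left d c),
    ZMod.sum_stdAddChar_isUnit_castHom_eq_zero_of_one_lt_gcd hcd]

theorem exp_sum_noncoprime_case (c d r : ℕ) (hc : 0 < c) (hd : 0 < d) (hr : 0 < r)
    (hrd : Nat.gcd r d = 1) (hcd : 1 < Nat.gcd c d) :
    (∑ a ∈ (Finset.Icc 1 (c * d)).filter
        (fun a => Nat.gcd a (c * d) = 1 ∧ a ≡ r [MOD d]), eFun (a / (c * d))) = 0 :=
  exp_sum_noncoprime_case_general c d r hc hd hcd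
end

section
/- Let c, d, r be positive integers with gcd(r, d) = 1 and gcd(c, d) = 1. Then the sum over integers a with 1 ≤ a ≤ cd, gcd(a, cd) = 1, and a ≡ r (mod d), of e(a/(cd)) equals μ(c)·e(-r·d̄/c)·e(r/(cd)), where d̄ is an inverse of d modulo c. -/
open Complex Real

/-!
For `a` in the range of summation write `a - r = d s`. Since `d d̄ ≡ 1 (mod c)`, the residue
`v ≡ a d̄ (mod c)` satisfies `s ≡ v - r d̄ (mod c)`, so `a/(cd) ≡ (v - r d̄)/c + r/(cd) (mod 1)`;
by the Chinese remainder theorem `a ↦ v` is a bijection onto the reduced residues modulo `c`.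
The sum therefore factors as `e(-r d̄/c) e(r/(cd))` times the Ramanujan sum `∑_{(v,c)=1} e(v/c)`,
which is `μ(c)`: detecting `(v, c) = 1` by `∑_{k ∣ (v,c)} μ(k)` leaves full sums of `m`-th roots
of unity over the multiples of each `k = c/m`, and these vanish unless `m = 1`.
-/

open Finset

lemma eFun_add (x y : ℝ) : eFun (x + y) = eFun x * eFun y := by
  simp only [eFun, ofReal_add, mul_add, Complex.exp_add]

lemma eFun_intCast (k : ℤ) : eFun k = 1 := by
  rw [eFun, ofReal_intCast, mul_comm, Complex.exp_int_mul_two_pi_mul_I]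

lemma eFun_add_intCast (x : ℝ) (k : ℤ) : eFun (x + k) = eFun x := by
  rw [eFun_add, eFun_intCast, mul_one]

lemma eFun_natCast_mod_div (m n : ℕ) : eFun ((m % n : ℕ) / n) = eFun (m / n) := by
  rcases eq_or_ne n 0 with rfl | hn
  · simp
  conv_rhs => rw [← Nat.mod_add_div m n]
  push_cast
  rw [add_div, mul_div_cancel_left₀ _ (by exact_mod_cast hn), ← Int.cast_natCast (m / n),
    eFun_add_intCast]

lemma sum_eFun_range_div (m : ℕ) : ∑ j ∈ range m, eFun (j / m) = if m = 1 then 1 else 0 := by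
  rcases Nat.lt_trichotomy m 1 with hm | rfl | hm
  · simp [Nat.lt_one_iff.mp hm]
  · simp [eFun]
  have hζ := Complex.isPrimitiveRoot_exp m (by omega)
  rw [if_neg hm.ne', ← hζ.geom_sum_eq_zero hm]
  refine sum_congr rfl fun j _ => ?_
  rw [eFun, ← Complex.exp_nat_mul]
  congr 1
  push_cast
  ring

lemma sum_moebius_divisors {R : Type*} [Ring R] (n : ℕ) :
    ∑ k ∈ n.divisors, (ArithmeticFunction.moebius k : R) = if n = 1 then 1 else 0 := by
  have h := congrArg (· n) (ArithmeticFunction.coe_moebius_mul_coe_zeta (R := R))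
  simpa only [ArithmeticFunction.coe_mul_zeta_apply, ArithmeticFunction.intCoe_apply,
    ArithmeticFunction.one_apply] using h

lemma sum_range_mul_filter_dvd {M : Type*} [AddCommMonoid M] {k : ℕ} (hk : k ≠ 0) (m : ℕ)
    (f : ℕ → M) : ∑ b ∈ (range (k * m)).filter (k ∣ ·), f b = ∑ j ∈ range m, f (k * j) := by
  have himage : (range (k * m)).filter (k ∣ ·) = (range m).image (k * ·) := by
    ext b
    simp only [mem_filter, mem_range, mem_image]
    constructor
    · rintro ⟨hb, j, rfl⟩
      exact ⟨j, Nat.lt_of_mul_lt_mul_left hb, rfl⟩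
    · rintro ⟨j, hj, rfl⟩
      exact ⟨Nat.mul_lt_mul_of_pos_left hj (Nat.pos_of_ne_zero hk), dvd_mul_right k j⟩
  rw [himage, sum_image fun i _ j _ h => Nat.eq_of_mul_eq_mul_left (Nat.pos_of_ne_zero hk) h]

lemma sum_eFun_filter_dvd {c k : ℕ} (hc : c ≠ 0) (hk : k ∣ c) :
    ∑ b ∈ (range c).filter (k ∣ ·), eFun (b / c) = if k = c then 1 else 0 := by
  obtain ⟨m, rfl⟩ := hk
  have hk0 : k ≠ 0 := left_ne_zero_of_mul hc
  rw [sum_range_mul_filter_dvd hk0]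
  have hscale : ∀ j : ℕ, eFun ((k * j : ℕ) / (k * m : ℕ)) = eFun (j / m) := fun j => by
    push_cast
    rw [mul_div_mul_left _ _ (by exact_mod_cast hk0)]
  simp only [hscale, sum_eFun_range_div, eq_comm (a := k), Nat.mul_eq_left hk0]

theorem sum_eFun_coprime_eq_moebius {c : ℕ} (hc : c ≠ 0) :
    ∑ b ∈ (range c).filter (·.Coprime c), eFun (b / c) = ArithmeticFunction.moebius c := by
  have hindicator : ∀ b : ℕ, (if b.Coprime c then eFun (b / c) else 0) =
      ∑ k ∈ (b.gcd c).divisors, (ArithmeticFunction.moebius k : ℂ) * eFun (b / c) := fun b => by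
    rw [← sum_mul, sum_moebius_divisors, ite_mul, one_mul, zero_mul]
  rw [sum_filter, sum_congr rfl fun b _ => hindicator b]
  rw [sum_comm' (t' := c.divisors) (s' := fun k => (range c).filter (k ∣ ·)) fun b k => by
    simp only [Nat.mem_divisors, Nat.dvd_gcd_iff, mem_filter, mem_range]
    have hgcd := Nat.gcd_ne_zero_right (m := b) hc
    tauto]
  simp only [← mul_sum]
  rw [sum_congr rfl fun k hk => by rw [sum_eFun_filter_dvd hc (Nat.dvd_of_mem_divisors hk)]]
  simp [sum_ite_eq', hc]

lemma eFun_div_mul_eq_of_modEq {a c d r dinv : ℕ} (hc : c ≠ 0) (hd : d ≠ 0)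
    (har : a ≡ r [MOD d]) (hdinv : d * dinv ≡ 1 [MOD c]) :
    eFun (a / (c * d)) =
      eFun (-((r * dinv : ℕ) : ℝ) / c) * eFun (r / (c * d)) * eFun ((a * dinv % c : ℕ) / c) := by
  obtain ⟨s, hs⟩ := Nat.modEq_iff_dvd.mp har.symm
  obtain ⟨t, ht⟩ := Nat.modEq_iff_dvd.mp hdinv.symm
  have hs' : (a : ℝ) - r = d * s := by exact_mod_cast hs
  have ht' : (d : ℝ) * dinv - 1 = c * t := by exact_mod_cast ht
  have hphase : (a : ℝ) / (c * d) =
      -((r * dinv : ℕ) : ℝ) / c + r / (c * d) + (a * dinv : ℕ) / c + ((-(s * t) : ℤ) : ℝ) := by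
    have hc' : (c : ℝ) ≠ 0 := by exact_mod_cast hc
    have hd' : (d : ℝ) ≠ 0 := by exact_mod_cast hd
    push_cast
    field_simp
    linear_combination (1 - (d : ℝ) * dinv) * hs' - (d * s : ℝ) * ht'
  rw [eFun_natCast_mod_div, ← eFun_add, ← eFun_add, hphase, eFun_add_intCast]

lemma Nat.exists_mem_Icc_modEq {n : ℕ} (hn : n ≠ 0) (k : ℕ) : ∃ a ∈ Icc 1 n, a ≡ k [MOD n] := by
  rcases (k % n).eq_zero_or_pos with hk | hk
  · exact ⟨n, mem_Icc.mpr ⟨Nat.one_le_iff_ne_zero.mpr hn, le_rfl⟩, by simp [Nat.ModEq, hk]⟩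
  · exact ⟨k % n, mem_Icc.mpr ⟨hk, (Nat.mod_lt k (Nat.pos_of_ne_zero hn)).le⟩, Nat.mod_modEq k n⟩

lemma Nat.exists_mem_Icc_modEq_and_modEq {c d : ℕ} (hcd : c.Coprime d) (hc : c ≠ 0) (hd : d ≠ 0)
    (x y : ℕ) : ∃ a ∈ Icc 1 (c * d), a ≡ x [MOD c] ∧ a ≡ y [MOD d] := by
  let k := Nat.chineseRemainder hcd x y
  obtain ⟨a, ha, hak⟩ := Nat.exists_mem_Icc_modEq (mul_ne_zero hc hd) k
  obtain ⟨hac, had⟩ := (Nat.modEq_and_modEq_iff_modEq_mul hcd).mpr hak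
  exact ⟨a, ha, hac.trans k.2.1, had.trans k.2.2⟩

theorem sum_filter_modEq_comp_mul_mod {M : Type*} [AddCommMonoid M] {c d r dinv : ℕ}
    (hd : d ≠ 0) (hrd : r.Coprime d) (hcd : c.Coprime d) (hdinv : d * dinv ≡ 1 [MOD c])
    (f : ℕ → M) :
    ∑ a ∈ (Icc 1 (c * d)).filter (fun a => a.gcd (c * d) = 1 ∧ a ≡ r [MOD d]), f (a * dinv % c) =
      ∑ v ∈ (range c).filter (·.Coprime c), f v := by
  have hdinv_coprime : dinv.Coprime c := Nat.coprime_of_mul_modEq_one d (by rwa [mul_comm])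
  refine sum_nbij (· * dinv % c) ?_ ?_ ?_ fun _ _ => rfl
  · simp only [mem_filter, mem_Icc, mem_range, and_imp]
    intro a ha1 ha2 hacd _
    have hc : c ≠ 0 := by rintro rfl; omega
    refine ⟨Nat.mod_lt _ (Nat.pos_of_ne_zero hc), ?_⟩
    rw [Nat.Coprime, (Nat.mod_modEq _ _).gcd_eq]
    exact (Nat.Coprime.coprime_mul_right_right hacd).mul_left hdinv_coprime
  · simp only [Set.InjOn, coe_filter, Set.mem_ofPred_eq, mem_Icc, and_imp]
    intro a ha1 ha2 _ har b hb1 hb2 _ hbr hab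
    have hmodc : a ≡ b [MOD c] := Nat.ModEq.cancel_right_of_coprime hdinv_coprime.symm hab
    have hmodcd : a ≡ b [MOD c * d] :=
      (Nat.modEq_and_modEq_iff_modEq_mul hcd).mp ⟨hmodc, har.trans hbr.symm⟩
    exact hmodcd.eq_of_abs_lt (abs_sub_lt_iff.mpr ⟨by omega, by omega⟩)
  · simp only [Set.SurjOn, coe_filter, Set.subset_def, Set.mem_ofPred_eq, mem_range, Set.mem_image]
    rintro v ⟨hvc, hv⟩
    have hc : c ≠ 0 := by rintro rfl; omega
    obtain ⟨a, ha, hac, had⟩ := Nat.exists_mem_Icc_modEq_and_modEq hcd hc hd (v * d) r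
    have hcoprime : a.Coprime (c * d) := by
      refine Nat.Coprime.mul_right ?_ ?_
      · rw [Nat.Coprime, hac.gcd_eq]; exact hv.mul_left hcd.symm
      · rw [Nat.Coprime, had.gcd_eq]; exact hrd
    refine ⟨a, ⟨ha, hcoprime, had⟩, ?_⟩
    calc a * dinv % c = v * (d * dinv) % c := by rw [← mul_assoc]; exact hac.mul_right dinv
      _ = v := by rw [Nat.mul_mod, hdinv, ← Nat.mul_mod, mul_one, Nat.mod_eq_of_lt hvc]

theorem exp_sum_coprime_case'_general (c d r dinv : ℕ) (hc : 0 < c) (hd : 0 < d)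
    (hrd : Nat.gcd r d = 1) (hcd : Nat.gcd c d = 1)
    (hdinv : d * dinv ≡ 1 [MOD c]) :
    (∑ a ∈ (Finset.Icc 1 (c * d)).filter
        (fun a => Nat.gcd a (c * d) = 1 ∧ a ≡ r [MOD d]), eFun (a / (c * d))) =
      (ArithmeticFunction.moebius c : ℂ) * eFun (-((r * dinv : ℕ) : ℝ) / c) *
        eFun (r / (c * d)) := by
  rw [sum_congr rfl fun a ha => eFun_div_mul_eq_of_modEq hc.ne' hd.ne' (mem_filter.mp ha).2.2 hdinv,
    ← mul_sum, sum_filter_modEq_comp_mul_mod hd.ne' hrd hcd hdinv fun v : ℕ => eFun (v / c),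
    sum_eFun_coprime_eq_moebius hc.ne']
  ring

theorem exp_sum_coprime_case' (c d r dinv : ℕ) (hc : 0 < c) (hd : 0 < d) (hr : 0 < r)
    (hrd : Nat.gcd r d = 1) (hcd : Nat.gcd c d = 1)
    (hdinv : d * dinv ≡ 1 [MOD c]) :
    (∑ a ∈ (Finset.Icc 1 (c * d)).filter
        (fun a => Nat.gcd a (c * d) = 1 ∧ a ≡ r [MOD d]), eFun (a / (c * d))) =
      (ArithmeticFunction.moebius c : ℂ) * eFun (-((r * dinv : ℕ) : ℝ) / c) *
        eFun (r / (c * d)) :=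
  exp_sum_coprime_case'_general c d r dinv hc hd hrd hcd hdinv
end

section
/- If q > 1, m and n are positive integers with gcd(mn, q) = 1, then the sum over primitive even Dirichlet characters χ mod q (those with χ(-1) = 1) of χ(m)·conj(χ)(n) equals (1/2)·[Σ_{d | q, d | m−n} φ(d)μ(q/d) + Σ_{d | q, d | m+n} φ(d)μ(q/d)]. -/
/-!
A character `χ` mod `q` factors through a level `d ∣ q` exactly when its conductor divides `d`, so
`∑_{d ∣ q, χ factors through d} μ(q/d)` is the indicator of primitivity of `χ`. Exchanging sums,
the characters factoring through `d` are the characters of level `d`, and orthogonality gives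
`∑_{χ prim} χ(u) = ∑_{d ∣ q, u ≡ 1 (d)} φ(d) μ(q/d)` for a unit `u`. Even characters are selected by
`(1 + χ(-1))/2`, which turns `χ(u)` into `(χ(u) + χ(-u))/2`; for `u = m n⁻¹` the conditions
`±u ≡ 1 (d)` become `d ∣ m ∓ n`.
-/

open ArithmeticFunction
open scoped ArithmeticFunction.Moebius

namespace ArithmeticFunction

theorem sum_divisors_moebius_s8 (n : ℕ) : ∑ d ∈ n.divisors, μ d = if n = 1 then 1 else 0 := by
  rw [← coe_mul_zeta_apply, moebius_mul_coe_zeta, one_apply]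

theorem sum_divisors_filter_dvd_moebius_div {q c : ℕ} (hq : q ≠ 0) (hc : c ∣ q) :
    ∑ d ∈ q.divisors with c ∣ d, μ (q / d) = if c = q then 1 else 0 := by
  have hc₀ : 0 < c := Nat.pos_of_dvd_of_pos hc (Nat.pos_of_ne_zero hq)
  have hdual : ∀ e ∈ q.divisors, c ∣ q / e ↔ e ∣ q / c := fun e he => by
    rw [Nat.dvd_div_iff_mul_dvd (Nat.dvd_of_mem_divisors he),
      Nat.dvd_div_iff_mul_dvd hc, mul_comm]
  calc ∑ d ∈ q.divisors with c ∣ d, μ (q / d)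
      = ∑ e ∈ q.divisors with c ∣ q / e, μ e := by
        rw [Finset.sum_filter, Finset.sum_filter, ← Nat.sum_div_divisors]
        refine Finset.sum_congr rfl fun e he => ?_
        rw [Nat.div_div_self (Nat.dvd_of_mem_divisors he) hq]
    _ = ∑ e ∈ (q / c).divisors, μ e := by
        rw [Finset.filter_congr hdual,
          Nat.divisors_filter_dvd_of_dvd hq (Nat.div_dvd_of_dvd hc)]
    _ = if c = q then 1 else 0 := by
        rw [sum_divisors_moebius_s8]
        exact if_congr (by rw [Nat.div_eq_iff_eq_mul_left hc₀ hc, one_mul, eq_comm]) rfl rfl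

end ArithmeticFunction

theorem ZMod.cast_mul_ringInverse_eq_one_iff {q d : ℕ} (hd : d ∣ q) {a b : ZMod q}
    (hb : IsUnit b) :
    (ZMod.cast (a * Ring.inverse b) : ZMod d) = 1 ↔ (ZMod.cast a : ZMod d) = ZMod.cast b := by
  obtain ⟨v, rfl⟩ := hb
  simp only [← ZMod.castHom_apply (h := hd), Ring.inverse_unit, map_mul]
  exact Units.mul_inv_eq_one (u := Units.map (ZMod.castHom hd (ZMod d)).toMonoidHom v)

theorem ZMod.cast_intCast_mul_ringInverse_eq_one_iff {q d : ℕ} (hd : d ∣ q) {a b : ℤ}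
    (hb : IsUnit (b : ZMod q)) :
    (ZMod.cast ((a : ZMod q) * Ring.inverse (b : ZMod q)) : ZMod d) = 1 ↔
      (d : ℤ) ∣ a - b := by
  rw [ZMod.cast_mul_ringInverse_eq_one_iff hd hb, ZMod.cast_intCast hd, ZMod.cast_intCast hd,
    ZMod.intCast_eq_intCast_iff_dvd_sub, dvd_sub_comm]

namespace DirichletCharacter

variable {R : Type*} [CommRing R] {n : ℕ}

open scoped Classical in
theorem sum_divisors_filter_factorsThrough_moebius_div [NeZero n]
    (χ : DirichletCharacter R n) :
    ∑ d ∈ n.divisors with χ.FactorsThrough d, μ (n / d) = if χ.IsPrimitive then 1 else 0 := by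
  have h : {d ∈ n.divisors | χ.FactorsThrough d} = {d ∈ n.divisors | χ.conductor ∣ d} :=
    Finset.filter_congr fun d hd =>
      χ.mem_conductorSet_iff_conductor_dvd (Nat.dvd_of_mem_divisors hd)
  rw [h, sum_divisors_filter_dvd_moebius_div (NeZero.ne n) χ.conductor_dvd_level]
  exact if_congr χ.isPrimitive_def.symm rfl rfl

open scoped Classical in
theorem sum_filter_factorsThrough_apply_unit [IsDomain R] [NeZero n] {d : ℕ} (hd : d ∣ n)
    (u : (ZMod n)ˣ) :
    ∑ χ : DirichletCharacter R n with χ.FactorsThrough d, χ u =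
      ∑ ψ : DirichletCharacter R d, ψ (ZMod.cast (u : ZMod n)) := by
  refine (Finset.sum_bij (fun ψ _ => changeLevel hd ψ) (fun ψ _ => ?_)
    (fun _ _ _ _ h => changeLevel_injective hd h) (fun χ hχ => ?_) fun ψ _ => ?_).symm
  · exact Finset.mem_filter.mpr ⟨Finset.mem_univ _, changeLevel_factorsThrough _ hd⟩
  · obtain ⟨_, ψ, hψ⟩ := (Finset.mem_filter.mp hχ).2
    exact ⟨ψ, Finset.mem_univ _, hψ.symm⟩
  · exact (changeLevel_eq_cast_of_dvd ψ hd u).symm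

theorem two_mul_sum_filter_even [NoZeroDivisors R] (s : Finset (DirichletCharacter R n))
    (a : ZMod n) [DecidablePred (Even : DirichletCharacter R n → Prop)] :
    2 * ∑ χ ∈ s with χ.Even, χ a = ∑ χ ∈ s, (χ a + χ (-a)) := by
  rw [Finset.sum_filter, Finset.mul_sum]
  refine Finset.sum_congr rfl fun χ _ => ?_
  by_cases hχ : χ.Even
  · rw [if_pos hχ, hχ.eval_neg]; ring
  · rw [if_neg hχ, (χ.even_or_odd.resolve_left hχ).eval_neg]; ring

open scoped Classical in
theorem sum_filter_isPrimitive_apply {F : Type*} [Field F] [IsSepClosed F] [CharZero F]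
    [NeZero n] {u : ZMod n} (hu : IsUnit u) :
    ∑ χ : DirichletCharacter F n with χ.IsPrimitive, χ u =
      ∑ d ∈ n.divisors with (ZMod.cast u : ZMod d) = 1, ((d.totient * μ (n / d) : ℤ) : F) := by
  calc ∑ χ : DirichletCharacter F n with χ.IsPrimitive, χ u
      = ∑ χ : DirichletCharacter F n, ∑ d ∈ n.divisors with χ.FactorsThrough d,
          (μ (n / d) : F) * χ u := by
        rw [Finset.sum_filter]
        refine Finset.sum_congr rfl fun χ _ => ?_
        rw [← Finset.sum_mul, ← Int.cast_sum, sum_divisors_filter_factorsThrough_moebius_div]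
        split_ifs <;> simp
    _ = ∑ d ∈ n.divisors, (μ (n / d) : F) *
          ∑ χ : DirichletCharacter F n with χ.FactorsThrough d, χ u := by
        simp only [Finset.sum_filter, Finset.mul_sum, mul_ite, mul_zero]
        exact Finset.sum_comm
    _ = ∑ d ∈ n.divisors, (μ (n / d) : F) *
          if (ZMod.cast u : ZMod d) = 1 then (d.totient : F) else 0 := by
        refine Finset.sum_congr rfl fun d hd => ?_
        have : NeZero d := ⟨(Nat.pos_of_mem_divisors hd).ne'⟩
        rw [← hu.unit_spec, sum_filter_factorsThrough_apply_unit (Nat.dvd_of_mem_divisors hd),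
          sum_characters_eq]
    _ = _ := by
        rw [Finset.sum_filter]
        refine Finset.sum_congr rfl fun d _ => ?_
        split_ifs <;> push_cast <;> ring

open scoped Classical in
theorem sum_filter_isPrimitive_apply_mul_ringInverse {F : Type*} [Field F] [IsSepClosed F]
    [CharZero F] [NeZero n] {a b : ℤ} (ha : IsUnit (a : ZMod n)) (hb : IsUnit (b : ZMod n)) :
    ∑ χ : DirichletCharacter F n with χ.IsPrimitive, χ (a * Ring.inverse (b : ZMod n)) =
      ∑ d ∈ n.divisors.filter (fun d : ℕ => (d : ℤ) ∣ a - b),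
        ((d.totient * μ (n / d) : ℤ) : F) := by
  rw [sum_filter_isPrimitive_apply (ha.mul (isUnit_ringInverse.mpr hb))]
  exact Finset.sum_congr (Finset.filter_congr fun d hd =>
    ZMod.cast_intCast_mul_ringInverse_eq_one_iff (Nat.dvd_of_mem_divisors hd) hb) fun _ _ => rfl

open scoped Classical in
theorem two_mul_sum_filter_isPrimitive_even_apply_mul_ringInverse {F : Type*} [Field F]
    [IsSepClosed F] [CharZero F] [NeZero n] {a b : ℤ} (ha : IsUnit (a : ZMod n))
    (hb : IsUnit (b : ZMod n)) :
    2 * ∑ χ ∈ {χ : DirichletCharacter F n | χ.IsPrimitive} with χ.Even,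
        χ (a * Ring.inverse (b : ZMod n)) =
      ∑ d ∈ n.divisors.filter (fun d : ℕ => (d : ℤ) ∣ a - b),
        ((d.totient * μ (n / d) : ℤ) : F) +
      ∑ d ∈ n.divisors.filter (fun d : ℕ => (d : ℤ) ∣ a + b),
        ((d.totient * μ (n / d) : ℤ) : F) := by
  have hneg : -(a * Ring.inverse (b : ZMod n)) =
      ((-a : ℤ) : ZMod n) * Ring.inverse (b : ZMod n) := by
    rw [Int.cast_neg, neg_mul]
  rw [two_mul_sum_filter_even, Finset.sum_add_distrib, hneg,
    sum_filter_isPrimitive_apply_mul_ringInverse ha hb,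
    sum_filter_isPrimitive_apply_mul_ringInverse (by rwa [Int.cast_neg, IsUnit.neg_iff]) hb]
  simp only [← neg_add', dvd_neg]

end DirichletCharacter

theorem sum_primitive_even_chars_orthogonality_general (q m n : ℕ) (hq : 1 < q)
    (hco : Nat.gcd (m * n) q = 1) :
    (∑ᶠ (χ : DirichletCharacter ℂ q) (_ : χ.IsPrimitive ∧ χ.Even),
        χ (m : ZMod q) * (star χ) (n : ZMod q)) =
      (1 / 2 : ℂ) *
        ((∑ d ∈ q.divisors.filter (fun d : ℕ => (d : ℤ) ∣ ((m : ℤ) - (n : ℤ))),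
            ((Nat.totient d * ArithmeticFunction.moebius (q / d) : ℤ) : ℂ)) +
          ∑ d ∈ q.divisors.filter (fun d : ℕ => (d : ℤ) ∣ ((m : ℤ) + (n : ℤ))),
            ((Nat.totient d * ArithmeticFunction.moebius (q / d) : ℤ) : ℂ)) := by
  have : NeZero q := ⟨by omega⟩
  have hunit : ∀ k, k ∣ m * n → IsUnit ((k : ℤ) : ZMod q) := fun k hk => by
    rw [Int.cast_natCast, ZMod.isUnit_iff_coprime]
    exact Nat.Coprime.coprime_dvd_left hk hco
  classical
  have hsum : (∑ᶠ (χ : DirichletCharacter ℂ q) (_ : χ.IsPrimitive ∧ χ.Even),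
      χ (m : ZMod q) * (star χ) (n : ZMod q)) =
        ∑ χ ∈ {χ : DirichletCharacter ℂ q | χ.IsPrimitive} with χ.Even,
          χ ((m : ℤ) * Ring.inverse ((n : ℤ) : ZMod q)) := by
    rw [finsum_cond_eq_sum_of_cond_iff _ (t := {χ ∈ {χ | χ.IsPrimitive} | χ.Even})
      fun _ => by simp only [Finset.mem_filter, Finset.mem_univ, true_and]]
    refine Finset.sum_congr rfl fun χ _ => ?_
    rw [MulChar.star_eq_inv, MulChar.inv_apply, ← map_mul, Int.cast_natCast, Int.cast_natCast]
  have key :=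
    DirichletCharacter.two_mul_sum_filter_isPrimitive_even_apply_mul_ringInverse (F := ℂ)
      (hunit m (dvd_mul_right m n)) (hunit n (dvd_mul_left n m))
  rw [hsum]
  linear_combination key / 2

theorem sum_primitive_even_chars_orthogonality (q m n : ℕ) (hq : 1 < q)
    (hm : 0 < m) (hn : 0 < n) (hco : Nat.gcd (m * n) q = 1) :
    (∑ᶠ (χ : DirichletCharacter ℂ q) (_ : χ.IsPrimitive ∧ χ.Even),
        χ (m : ZMod q) * (star χ) (n : ZMod q)) =
      (1 / 2 : ℂ) *
        ((∑ d ∈ q.divisors.filter (fun d : ℕ => (d : ℤ) ∣ ((m : ℤ) - (n : ℤ))),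
            ((Nat.totient d * ArithmeticFunction.moebius (q / d) : ℤ) : ℂ)) +
          ∑ d ∈ q.divisors.filter (fun d : ℕ => (d : ℤ) ∣ ((m : ℤ) + (n : ℤ))),
            ((Nat.totient d * ArithmeticFunction.moebius (q / d) : ℤ) : ℂ)) :=
  sum_primitive_even_chars_orthogonality_general q m n hq hco
end
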